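/- arXiv:2003.12572 — 6 statements merged into one kernel-verified Lean document; each statement's English description precedes it below -/
import Mathlib

section
/- For all integers p, q ≥ 0, the Delannoy number D(p,q) satisfies D(p,q) = ((-1)^q / q!) · det W, where W is the (q+1)×(q+1) matrix whose first column has entries W_{i,1} = ⟨p⟩_{i-1} for 1 ≤ i ≤ q+1, and whose remaining entries are W_{i,j} = (-1)^{i-j} · C(i-1, j-1) · ⟨p+1⟩_{i-j} for 1 ≤ i ≤ q+1 and 2 ≤ j ≤ q+1 (with the convention that the binomial coefficient C(m,k) and the falling factorial ⟨z⟩_k vanish when the index i-j is negative, i.e. entries above the superdiagonal beyond one step are 0). -/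
/-- The Delannoy numbers: `D(p,q) = ∑_{i=0}^{p} C(p,i) C(q,i) 2^i`. -/
def delannoy (p q : ℕ) : ℕ :=
  ∑ i ∈ Finset.range (p + 1), p.choose i * q.choose i * 2 ^ i

/-- The `(q+1) × (q+1)` matrix `W(p,q)` (indexed from 0): the first column has entries
`⟨p⟩_i`, and for columns `j ≥ 1` the entry in row `i` is
`(-1)^{i+1-j} · C(i, j-1) · ⟨p+1⟩_{i+1-j}`, with entries above the superdiagonal
(i.e. with `j > i + 1`) being `0` since the binomial coefficient vanishes there. -/
def delannoyMatrix (p q : ℕ) : Matrix (Fin (q + 1)) (Fin (q + 1)) ℚ :=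
  Matrix.of fun i j =>
    if (j : ℕ) = 0 then (p.descFactorial (i : ℕ) : ℚ)
    else (-1 : ℚ) ^ ((i : ℕ) + 1 - (j : ℕ)) * (Nat.choose (i : ℕ) ((j : ℕ) - 1)) *
      ((p + 1).descFactorial ((i : ℕ) + 1 - (j : ℕ)) : ℚ)

/-!
The ordinary generating function of `q ↦ D(p,q)` is `(1 + x)^p / (1 - x)^(p+1)`, since
`∑_q C(q,r) x^q = x^r / (1 - x)^(r+1)`. Comparing coefficients of `x^i` in
`(1 - x)^(p+1) · ∑_q D(p,q) x^q = (1 + x)^p` and multiplying by `i!` shows that the first column of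
`W` is `∑_{t<q} t! D(p,t)` times column `t+1`, plus `q! D(p,q)` in the last row. After this column
operation, expanding along the first column leaves `(-1)^q q! D(p,q)` times a unitriangular minor.
-/

open Finset Matrix PowerSeries
open scoped Nat

namespace PowerSeries

variable {S : Type*} [CommRing S]

theorem coeff_one_add_X_pow (n m : ℕ) : coeff m ((1 + X : S⟦X⟧) ^ n) = n.choose m := by
  rw [← binomialSeries_nat (R := ℤ), binomialSeries_coeff, Ring.choose_natCast]
  simp

theorem coeff_one_sub_X_pow (n m : ℕ) :
    coeff m ((1 - X : S⟦X⟧) ^ n) = (-1) ^ m * n.choose m := by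
  have : (1 - X : S⟦X⟧) ^ n = rescale (-1) ((1 + X) ^ n) := by
    simp [rescale_X, sub_eq_add_neg]
  rw [this, coeff_rescale, coeff_one_add_X_pow]

theorem mk_choose_eq_X_pow_mul (r : ℕ) :
    (mk fun n ↦ (n.choose r : S)) = X ^ r * mk fun n ↦ ((r + n).choose r : S) := by
  ext n
  rw [coeff_X_pow_mul', coeff_mk]
  split_ifs with h
  · rw [coeff_mk, Nat.add_sub_cancel' h]
  · rw [Nat.choose_eq_zero_of_lt (not_le.mp h), Nat.cast_zero]

theorem mk_choose_mul_one_sub_pow (r : ℕ) :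
    (mk fun n ↦ (n.choose r : S)) * (1 - X) ^ (r + 1) = X ^ r := by
  rw [mk_choose_eq_X_pow_mul, mul_assoc, mk_add_choose_mul_one_sub_pow_eq_one, mul_one]

end PowerSeries

variable {S : Type*} [CommRing S]

theorem mk_delannoy_eq_sum (p : ℕ) :
    (mk fun q ↦ (delannoy p q : S)) =
      ∑ r ∈ range (p + 1), (p.choose r * 2 ^ r : S) • mk fun n ↦ (n.choose r : S) := by
  ext q
  simp only [delannoy, coeff_mk, map_sum, map_smul, smul_eq_mul, Nat.cast_sum, Nat.cast_mul,
    Nat.cast_pow, Nat.cast_ofNat]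
  exact sum_congr rfl fun _ _ ↦ by ring

theorem mk_delannoy_mul_one_sub_pow (p : ℕ) :
    (mk fun q ↦ (delannoy p q : S)) * (1 - X) ^ (p + 1) = (1 + X) ^ p := by
  calc (mk fun q ↦ (delannoy p q : S)) * (1 - X) ^ (p + 1)
      = ∑ r ∈ range (p + 1), (2 * X : S⟦X⟧) ^ r * (1 - X) ^ (p - r) * (p.choose r : S⟦X⟧) := by
        rw [mk_delannoy_eq_sum, sum_mul]
        refine sum_congr rfl fun r hr ↦ ?_
        have hrp : p + 1 = (r + 1) + (p - r) := by have := mem_range.mp hr; omega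
        rw [hrp, pow_add, smul_mul_assoc, ← mul_assoc, mk_choose_mul_one_sub_pow]
        simp only [Algebra.smul_def, map_mul, map_natCast, map_pow, map_ofNat]
        ring
    _ = (1 + X) ^ p := by rw [← add_pow]; ring_nf

theorem sum_neg_one_pow_choose_mul_delannoy (p i : ℕ) :
    ∑ t ∈ range (i + 1), (-1 : S) ^ (i - t) * (p + 1).choose (i - t) * delannoy p t =
      p.choose i := by
  have := congrArg (coeff i) (mk_delannoy_mul_one_sub_pow (S := S) p)
  rw [coeff_mul, coeff_one_add_X_pow, Nat.sum_antidiagonal_eq_sum_range_succ_mk] at this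
  simp only [coeff_mk, coeff_one_sub_X_pow] at this
  rw [← this]
  exact sum_congr rfl fun t _ ↦ by ring

theorem Nat.choose_mul_descFactorial_mul_factorial {i t : ℕ} (h : t ≤ i) (n : ℕ) :
    i.choose t * n.descFactorial (i - t) * t ! = i ! * n.choose (i - t) := by
  rw [Nat.descFactorial_eq_factorial_mul_choose, ← Nat.choose_mul_factorial_mul_factorial h]
  ring

theorem sum_descFactorial_mul_delannoy {i n : ℕ} (hi : i < n) (p : ℕ) :
    ∑ t ∈ range n, t ! * delannoy p t * ((-1 : S) ^ (i - t) * i.choose t *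
      (p + 1).descFactorial (i - t)) = p.descFactorial i := by
  have hsub : range (i + 1) ⊆ range n := range_subset_range.mpr hi
  rw [← sum_subset hsub fun t _ ht ↦ by
    rw [Nat.choose_eq_zero_of_lt (by simpa using ht), Nat.cast_zero, mul_zero, zero_mul, mul_zero]]
  calc _ = (i ! : S) * ∑ t ∈ range (i + 1),
        (-1 : S) ^ (i - t) * (p + 1).choose (i - t) * delannoy p t := by
        rw [mul_sum]
        refine sum_congr rfl fun t ht ↦ ?_
        have := congrArg (Nat.cast (R := S))
          (Nat.choose_mul_descFactorial_mul_factorial (Nat.le_of_lt_succ (mem_range.mp ht)) (p + 1))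
        push_cast at this
        linear_combination (-1 : S) ^ (i - t) * delannoy p t * this
    _ = p.descFactorial i := by
        rw [sum_neg_one_pow_choose_mul_delannoy, Nat.descFactorial_eq_factorial_mul_choose]
        push_cast; ring

theorem Matrix.det_updateCol_zero_single_last {n : ℕ} (A : Matrix (Fin (n + 1)) (Fin (n + 1)) S)
    (x : S) :
    (A.updateCol 0 (Pi.single (Fin.last n) x)).det =
      (-1) ^ n * x * (A.submatrix Fin.castSucc Fin.succ).det := by
  rw [det_succ_column_zero, Fintype.sum_eq_single (Fin.last n) fun i hi ↦ by simp [hi]]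
  simp [← Fin.succAbove_zero, submatrix_updateCol_succAbove]

theorem delannoyMatrix_apply_succ (p q : ℕ) (i : Fin (q + 1)) (t : Fin q) :
    delannoyMatrix p q i t.succ =
      (-1) ^ ((i : ℕ) - t) * (i : ℕ).choose t * (p + 1).descFactorial ((i : ℕ) - t) := by
  simp [delannoyMatrix]

theorem det_delannoyMatrix_submatrix (p q : ℕ) :
    ((delannoyMatrix p q).submatrix Fin.castSucc Fin.succ).det = 1 := by
  rw [det_of_isLowerTriangular _ fun i j (hij : i < j) ↦ by
    simp [delannoyMatrix_apply_succ, Nat.choose_eq_zero_of_lt (Fin.lt_def.mp hij)]]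
  simp [delannoyMatrix_apply_succ]

def delannoyColumnCoeffs (p q : ℕ) : Fin (q + 1) → ℚ :=
  Fin.cons 1 fun t ↦ -(t ! * delannoy p t : ℚ)

theorem sum_delannoyColumnCoeffs_smul (p q : ℕ) :
    (fun i ↦ ∑ j, delannoyColumnCoeffs p q j • delannoyMatrix p q i j) =
      Pi.single (Fin.last q) (q ! * delannoy p q : ℚ) := by
  ext i
  simp only [Fin.sum_univ_succ, delannoyColumnCoeffs, Fin.cons_zero, Fin.cons_succ,
    delannoyMatrix_apply_succ, smul_eq_mul, one_mul, neg_mul, sum_neg_distrib]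
  rw [Fin.sum_univ_eq_sum_range (fun t ↦ t ! * (delannoy p t : ℚ) *
    ((-1) ^ ((i : ℕ) - t) * (i : ℕ).choose t * (p + 1).descFactorial ((i : ℕ) - t))) q]
  have hcol : delannoyMatrix p q i 0 = p.descFactorial i := by simp [delannoyMatrix]
  obtain rfl | hi := eq_or_ne i (Fin.last q)
  · have := sum_descFactorial_mul_delannoy (S := ℚ) (Nat.lt_succ_self q) p
    rw [sum_range_succ] at this
    simp only [Fin.val_last, Nat.sub_self, pow_zero, Nat.choose_self, Nat.descFactorial_zero,
      Nat.cast_one, mul_one] at this hcol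
    rw [hcol, Pi.single_eq_same, ← this, Fin.val_last]
    ring
  · rw [hcol, Pi.single_eq_of_ne hi, sum_descFactorial_mul_delannoy (Fin.val_lt_last hi),
      add_neg_cancel]

/-- A determinantal expression of the Delannoy numbers:
`D(p,q) = ((-1)^q / q!) · det W(p,q)`. -/
theorem delannoy_eq_det (p q : ℕ) :
    (delannoy p q : ℚ) =
      (-1 : ℚ) ^ q / (q.factorial : ℚ) * (delannoyMatrix p q).det := by
  have hdet : (delannoyMatrix p q).det = (-1) ^ q * (q ! * delannoy p q) := by
    have := det_updateCol_sum (delannoyMatrix p q) 0 (delannoyColumnCoeffs p q)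
    rw [sum_delannoyColumnCoeffs_smul, det_updateCol_zero_single_last,
      det_delannoyMatrix_submatrix] at this
    simpa [delannoyColumnCoeffs] using this.symm
  have hsign : (-1 : ℚ) ^ q * (-1) ^ q = 1 := by rw [← mul_pow]; norm_num
  rw [hdet, div_mul_eq_mul_div, eq_div_iff (by positivity)]
  linear_combination -(q ! * delannoy p q : ℚ) * hsign
end

section
/- For every integer n ≥ 0, the central Delannoy number D(n) = D(n,n) satisfies D(n) = 1 + (-1)^{n+1} · ∑_{r=0}^{n-1} (-1)^r · C(n+1, r+1) · D(n,r). -/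
/-!
Expanding `D(n,r) = ∑ᵢ C(n,i) C(r,i) 2^i` and exchanging the sums, the full alternating sum
`∑_{r=0}^{n} (-1)^r C(n+1,r+1) D(n,r)` becomes `∑ᵢ C(n,i) 2^i ∑_r (-1)^r C(n+1,r+1) C(r,i)`.
The inner sum equals `(-1)^i` for `i ≤ n`: by Pascal's rule it grows with `n` only by the
binomial-inversion sum `∑_r (-1)^r C(n+1,r) C(r,i) = (-1)^i δ_{i,n+1}`. So the whole sum is
`(1 - 2)^n = (-1)^n`. Splitting off the term `r = n`, which is `(-1)^n D(n)`, gives the recursion.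
-/

open Finset

theorem alternating_sum_range_choose_mul_choose (m i : ℕ) :
    ∑ r ∈ range (m + 1), (-1 : ℤ) ^ r * m.choose r * r.choose i =
      if i = m then (-1) ^ i else 0 := by
  rcases lt_or_ge m i with him | him
  · rw [if_neg him.ne']
    refine sum_eq_zero fun r hr => ?_
    rw [Nat.choose_eq_zero_of_lt (show r < i by grind), Nat.cast_zero, mul_zero]
  have hlow : ∑ r ∈ range i, (-1 : ℤ) ^ r * m.choose r * r.choose i = 0 :=
    sum_eq_zero fun r hr => by
      rw [Nat.choose_eq_zero_of_lt (mem_range.mp hr), Nat.cast_zero, mul_zero]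
  have hshift (t : ℕ) : (-1 : ℤ) ^ (i + t) * m.choose (i + t) * (i + t).choose i =
      (-1) ^ i * m.choose i * ((-1) ^ t * (m - i).choose t) := by
    have h := Nat.choose_mul (n := m) (k := i + t) (s := i) (Nat.le_add_right i t)
    rw [Nat.add_sub_cancel_left] at h
    rw [pow_add, mul_assoc, ← Nat.cast_mul, h]
    push_cast
    ring
  rw [show m + 1 = i + (m - i + 1) by omega, sum_range_add, hlow, zero_add]
  simp only [hshift, ← mul_sum, Int.alternating_sum_range_choose]
  by_cases hi : i = m
  · simp [hi]
  · rw [if_neg (by omega), if_neg hi, mul_zero]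

theorem alternating_sum_range_choose_succ_mul_choose (n i : ℕ) :
    ∑ r ∈ range (n + 1), (-1 : ℤ) ^ r * (n + 1).choose (r + 1) * r.choose i =
      if i ≤ n then (-1) ^ i else 0 := by
  induction n with
  | zero => cases i <;> simp
  | succ n ih =>
    have hpascal : ∑ r ∈ range (n + 2), (-1 : ℤ) ^ r * (n + 2).choose (r + 1) * r.choose i =
        ∑ r ∈ range (n + 2), (-1 : ℤ) ^ r * (n + 1).choose r * r.choose i +
          ∑ r ∈ range (n + 2), (-1 : ℤ) ^ r * (n + 1).choose (r + 1) * r.choose i := by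
      rw [← sum_add_distrib]
      refine sum_congr rfl fun r _ => ?_
      rw [Nat.choose_succ_succ (n + 1) r]
      push_cast
      ring
    rw [hpascal, alternating_sum_range_choose_mul_choose, sum_range_succ _ (n + 1), ih,
      Nat.choose_succ_self, Nat.cast_zero, mul_zero, zero_mul, add_zero]
    split_ifs <;> omega

theorem alternating_sum_range_choose_succ_mul_delannoy {n p : ℕ} (hp : p ≤ n) :
    ∑ r ∈ range (n + 1), (-1 : ℤ) ^ r * (n + 1).choose (r + 1) * delannoy p r = (-1) ^ p := by
  have hinner (i : ℕ) (hi : i ∈ range (p + 1)) :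
      ∑ r ∈ range (n + 1), (-1 : ℤ) ^ r * (n + 1).choose (r + 1) * (p.choose i * r.choose i * 2 ^ i)
        = (-2) ^ i * 1 ^ (p - i) * p.choose i := by
    have hin : i ≤ n := by grind
    calc _ = p.choose i * 2 ^ i *
          ∑ r ∈ range (n + 1), (-1 : ℤ) ^ r * (n + 1).choose (r + 1) * r.choose i := by
          rw [mul_sum]
          exact sum_congr rfl fun r _ => by ring
      _ = _ := by
          rw [alternating_sum_range_choose_succ_mul_choose, if_pos hin, neg_pow 2 i]
          ring
  simp only [delannoy, Nat.cast_sum, Nat.cast_mul, Nat.cast_pow, Nat.cast_ofNat, mul_sum]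
  rw [sum_comm, sum_congr rfl hinner, ← add_pow]
  norm_num

/-- A recursive relation for central Delannoy numbers:
`D(n) = D(n,n) = 1 + (-1)^{n+1} · ∑_{r=0}^{n-1} (-1)^r · C(n+1, r+1) · D(n,r)`. -/
theorem centralDelannoy_recursion (n : ℕ) :
    (delannoy n n : ℤ) =
      1 + (-1 : ℤ) ^ (n + 1) *
        ∑ r ∈ Finset.range n,
          (-1 : ℤ) ^ r * ((n + 1).choose (r + 1) : ℤ) * (delannoy n r : ℤ) := by
  have h := alternating_sum_range_choose_succ_mul_delannoy (le_refl n)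
  rw [sum_range_succ, Nat.choose_self, Nat.cast_one, mul_one] at h
  have hsq : ((-1 : ℤ) ^ n) ^ 2 = 1 := by rw [← pow_mul', (even_two_mul n).neg_one_pow]
  rw [pow_succ]
  linear_combination (-1 : ℤ) ^ n * h + (1 - (delannoy n n : ℤ)) * hsq
end

section
/- For every integer n ≥ 0, the central Delannoy number D(n) = D(n,n) satisfies D(n) = 1 - ∑_{r=1}^{n} (-1)^r · C(n+1, r) · D(n, n-r). -/
open Finset

theorem sum_neg_one_pow_mul_choose_mul_choose_sub (m i : ℕ) :
    ∑ r ∈ range (m + 1), (-1 : ℤ) ^ r * m.choose r * (m - r).choose i = if m = i then 1 else 0 := by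
  rw [← fwdDiff_iter_choose_zero, fwdDiff_iter_eq_sum_shift, ← sum_range_reflect]
  refine sum_congr rfl fun r hr => ?_
  replace hr : r ≤ m := mem_range_succ_iff.mp hr
  rw [Nat.add_sub_cancel, Nat.sub_sub_self hr, Nat.choose_symm hr, smul_eq_mul, zero_add,
    smul_eq_mul, mul_one]

theorem sum_neg_one_pow_mul_choose_succ_mul_choose_sub_succ (n i : ℕ) :
    ∑ r ∈ range (n + 2), (-1 : ℤ) ^ r * (n + 2).choose r * (n + 1 - r).choose i =
      (if n + 1 = i then 1 else 0) -
        ∑ r ∈ range (n + 1), (-1 : ℤ) ^ r * (n + 1).choose r * (n - r).choose i := by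
  have pascal : ∀ r, (-1 : ℤ) ^ (r + 1) * (n + 2).choose (r + 1) * (n + 1 - (r + 1)).choose i =
      (-1 : ℤ) ^ (r + 1) * (n + 1).choose (r + 1) * (n + 1 - (r + 1)).choose i -
        (-1 : ℤ) ^ r * (n + 1).choose r * (n - r).choose i := fun r => by
    rw [Nat.choose_succ_succ', Nat.add_sub_add_right]
    push_cast
    ring
  rw [← sum_neg_one_pow_mul_choose_mul_choose_sub, sum_range_succ' _ (n + 1),
    sum_range_succ' _ (n + 1), sum_congr rfl fun r _ => pascal r, sum_sub_distrib]
  simp only [pow_zero, Nat.choose_zero_right]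
  ring

theorem sum_neg_one_pow_mul_choose_succ_mul_choose_sub_of_lt {n i : ℕ} (h : n < i) :
    ∑ r ∈ range (n + 1), (-1 : ℤ) ^ r * (n + 1).choose r * (n - r).choose i = 0 :=
  sum_eq_zero fun r _ => by
    rw [Nat.choose_eq_zero_of_lt (by omega : n - r < i), Nat.cast_zero, mul_zero]

theorem sum_neg_one_pow_mul_choose_succ_mul_choose_sub {n i : ℕ} (h : i ≤ n) :
    ∑ r ∈ range (n + 1), (-1 : ℤ) ^ r * (n + 1).choose r * (n - r).choose i = (-1) ^ (n - i) := by
  induction n with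
  | zero =>
    obtain rfl : i = 0 := Nat.le_zero.mp h
    simp
  | succ n ih =>
    rw [sum_neg_one_pow_mul_choose_succ_mul_choose_sub_succ]
    rcases h.eq_or_lt with rfl | h
    · rw [if_pos rfl, sum_neg_one_pow_mul_choose_succ_mul_choose_sub_of_lt n.lt_succ_self]
      simp
    · rw [if_neg h.ne', ih (by omega), Nat.sub_add_comm (by omega), pow_succ]
      ring

theorem sum_neg_one_pow_mul_choose_succ_mul_delannoy_sub (n : ℕ) :
    ∑ r ∈ range (n + 1), (-1 : ℤ) ^ r * (n + 1).choose r * delannoy n (n - r) = 1 := by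
  calc ∑ r ∈ range (n + 1), (-1 : ℤ) ^ r * (n + 1).choose r * delannoy n (n - r)
      = ∑ i ∈ range (n + 1), (n.choose i : ℤ) * 2 ^ i *
          ∑ r ∈ range (n + 1), (-1 : ℤ) ^ r * (n + 1).choose r * (n - r).choose i := by
        simp only [delannoy, Nat.cast_sum, Nat.cast_mul, Nat.cast_pow, Nat.cast_ofNat, mul_sum]
        rw [sum_comm]
        refine sum_congr rfl fun i _ => sum_congr rfl fun r _ => by ring
    _ = ∑ i ∈ range (n + 1), (2 : ℤ) ^ i * (-1) ^ (n - i) * n.choose i := by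
        refine sum_congr rfl fun i hi => ?_
        rw [sum_neg_one_pow_mul_choose_succ_mul_choose_sub (mem_range_succ_iff.mp hi)]
        ring
    _ = 1 := by rw [← add_pow]; norm_num

/-- A recursive relation for central Delannoy numbers:
`D(n) = D(n,n) = 1 - ∑_{r=1}^{n} (-1)^r · C(n+1, r) · D(n, n-r)`. -/
theorem centralDelannoy_recursion' (n : ℕ) :
    (delannoy n n : ℤ) =
      1 - ∑ r ∈ Finset.Icc 1 n,
            (-1 : ℤ) ^ r * ((n + 1).choose r : ℤ) * (delannoy n (n - r) : ℤ) := by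
  have h := sum_neg_one_pow_mul_choose_succ_mul_delannoy_sub n
  rw [range_eq_Ico, sum_eq_sum_Ico_succ_bot n.succ_pos, zero_add, Nat.succ_eq_add_one,
    Ico_add_one_right_eq_Icc] at h
  simp only [pow_zero, Nat.choose_zero_right, Nat.cast_one, one_mul, Nat.sub_zero] at h
  linear_combination h
end

section
/- Let u and v be n-times differentiable real functions on an open interval with v(t) ≠ 0 for all t in the interval. Then for every t in the interval, the n-th derivative of the quotient u/v at t equals (-1)^n · det(W(t)) / v(t)^{n+1}, where W(t) is the (n+1)×(n+1) matrix whose first column has entries W_{k,1}(t) = u^{(k-1)}(t) for 1 ≤ k ≤ n+1, and whose remaining entries are W_{i,j}(t) = C(i-1, j-1) · v^{(i-j)}(t) for 1 ≤ i ≤ n+1 and 2 ≤ j ≤ n+1 (entries with i-j < 0 being 0). -/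
/-!
Write `q = u / v`. Leibniz's rule for `u = q * v` says that column `0` of `W` is
`∑ m, q^{(m)} • (column m + 1)`, except that the term `m = n` is `q^{(n)} • v • eₙ` because the
matrix has no column `n + 1`. Column operations therefore give `det W = q^{(n)} det B`, where `B`
is `W` with first column `v • eₙ`; expanding `det B` along that column leaves a lower triangular
minor with diagonal `v`, so `det W = (-1)^n q^{(n)} v^{n+1}`.
-/

open Set

namespace Matrix

variable {R : Type*} [CommRing R]

lemma det_of_choose_mul_sub (n : ℕ) (G : ℕ → R) :
    det (of fun i j : Fin n => ((i : ℕ).choose j : R) * G (i - j)) = G 0 ^ n := by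
  rw [det_of_isLowerTriangular]
  · simp
  · intro i j hij
    have hlt : (i : ℕ) < j := OrderDual.toDual_lt_toDual.mp hij
    simp [Nat.choose_eq_zero_of_lt hlt]

/-- The matrix `W` of the quotient formula, with `F` and `G` standing for the sequences of
derivatives of the numerator and the denominator. -/
def quotientDeriv (n : ℕ) (F G : ℕ → R) : Matrix (Fin (n + 1)) (Fin (n + 1)) R :=
  of fun i j => if (j : ℕ) = 0 then F i else ((i : ℕ).choose ((j : ℕ) - 1) : R) * G (i + 1 - j)

lemma quotientDeriv_apply_zero (n : ℕ) (F G : ℕ → R) (i : Fin (n + 1)) :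
    quotientDeriv n F G i 0 = F i := by
  simp [quotientDeriv]

lemma quotientDeriv_apply_succ (n : ℕ) (F G : ℕ → R) (i : Fin (n + 1)) (j : Fin n) :
    quotientDeriv n F G i j.succ = ((i : ℕ).choose j : R) * G (i - j) := by
  simp [quotientDeriv]

lemma det_quotientDeriv_single (n : ℕ) (c : R) (G : ℕ → R) :
    det (quotientDeriv n (Pi.single n c) G) = (-1) ^ n * c * G 0 ^ n := by
  rw [det_succ_column_zero, Finset.sum_eq_single (Fin.last n)]
  · have hminor : (quotientDeriv n (Pi.single n c) G).submatrix Fin.castSucc Fin.succ =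
        of fun i j : Fin n => ((i : ℕ).choose j : R) * G (i - j) := by
      ext i j
      simp [quotientDeriv_apply_succ]
    rw [Fin.succAbove_last, hminor, det_of_choose_mul_sub, quotientDeriv_apply_zero, Fin.val_last,
      Pi.single_eq_same]
  · intro i _ hi
    rw [quotientDeriv_apply_zero, Pi.single_eq_of_ne (by simpa [Fin.ext_iff] using hi)]
    simp
  · simp

lemma quotientDeriv_eq_updateCol_sum {n : ℕ} {F G Q : ℕ → R}
    (hF : ∀ i ≤ n, F i = ∑ m ∈ Finset.range (i + 1), (i.choose m : R) * Q m * G (i - m)) :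
    quotientDeriv n F G = (quotientDeriv n (Pi.single n (G 0)) G).updateCol 0 fun k =>
      ∑ j, (Fin.cons (Q n) (fun j : Fin n => Q j) : Fin (n + 1) → R) j •
        quotientDeriv n (Pi.single n (G 0)) G k j := by
  ext k j
  rcases Fin.eq_zero_or_eq_succ j with rfl | ⟨j, rfl⟩
  · have hk : (k : ℕ) ≤ n := Fin.is_le k
    rw [updateCol_self, quotientDeriv_apply_zero, hF k hk, Fin.sum_univ_succ]
    simp only [Fin.cons_zero, Fin.cons_succ, quotientDeriv_apply_zero, quotientDeriv_apply_succ,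
      smul_eq_mul]
    have hvanish : ∀ m ∈ Finset.range (n + 1), m ∉ Finset.range (k + 1) →
        ((k : ℕ).choose m : R) * Q m * G (k - m) = 0 := fun m _ hm => by
      rw [Nat.choose_eq_zero_of_lt (by simpa using hm), Nat.cast_zero, zero_mul, zero_mul]
    rw [Finset.sum_subset (Finset.range_subset_range.mpr (Nat.succ_le_succ hk)) hvanish,
      Finset.sum_range_succ, add_comm, Fin.sum_univ_eq_sum_range
        (fun m => Q m * ((k : ℕ).choose m * G (k - m))) n]
    congr 1
    · rcases hk.lt_or_eq with hlt | heq
      · simp [Nat.choose_eq_zero_of_lt hlt, Pi.single_eq_of_ne hlt.ne]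
      · simp [heq]
    · exact Finset.sum_congr rfl fun m _ => by ring
  · rw [updateCol_ne (Fin.succ_ne_zero j)]
    simp [quotientDeriv_apply_succ]

lemma det_quotientDeriv {n : ℕ} {F G Q : ℕ → R}
    (hF : ∀ i ≤ n, F i = ∑ m ∈ Finset.range (i + 1), (i.choose m : R) * Q m * G (i - m)) :
    det (quotientDeriv n F G) = (-1) ^ n * Q n * G 0 ^ (n + 1) := by
  rw [quotientDeriv_eq_updateCol_sum hF, det_updateCol_sum, Fin.cons_zero, det_quotientDeriv_single,
    smul_eq_mul]
  ring

end Matrix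

lemma iteratedDerivWithin_eq_sum_div_mul {𝕜 : Type*} [NontriviallyNormedField 𝕜] {s : Set 𝕜}
    {u v : 𝕜 → 𝕜} {n : ℕ} {t : 𝕜} (hs : UniqueDiffOn 𝕜 s) (ht : t ∈ s)
    (hu : ContDiffOn 𝕜 n u s) (hv : ContDiffOn 𝕜 n v s) (hv0 : ∀ x ∈ s, v x ≠ 0) :
    iteratedDerivWithin n u s t = ∑ m ∈ Finset.range (n + 1), (n.choose m : 𝕜) *
      iteratedDerivWithin m (fun x => u x / v x) s t * iteratedDerivWithin (n - m) v s t := by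
  have hu_eq : EqOn u ((fun x => u x / v x) * v) s := fun x hx =>
    (div_mul_cancel₀ _ (hv0 x hx)).symm
  rw [iteratedDerivWithin_congr hu_eq ht]
  exact iteratedDerivWithin_mul ht hs ((hu.div hv hv0) t ht) (hv t ht)

/-- The Bourbaki formula for the `n`-th derivative of a quotient: if `u` and `v` are
`n`-times differentiable on an open interval `(a, b)` and `v` does not vanish there,
then for `t ∈ (a, b)`,
`(u/v)^{(n)}(t) = (-1)^n · det W(t) / v(t)^{n+1}`,
where `W(t)` is the `(n+1) × (n+1)` matrix (indexed from 0) whose column `0` has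
entries `u^{(i)}(t)` and whose entry in row `i`, column `j ≥ 1` is
`C(i, j-1) · v^{(i+1-j)}(t)`, the entries with `j > i + 1` being `0` since the
binomial coefficient vanishes there. -/
theorem deriv_quotient_det (n : ℕ) (a b : ℝ) (u v : ℝ → ℝ)
    (hu : ContDiffOn ℝ n u (Ioo a b)) (hv : ContDiffOn ℝ n v (Ioo a b))
    (hv0 : ∀ t ∈ Ioo a b, v t ≠ 0) :
    ∀ t ∈ Ioo a b,
      iteratedDerivWithin n (fun x => u x / v x) (Ioo a b) t =
        (-1 : ℝ) ^ n *
          (Matrix.det (Matrix.of fun i j : Fin (n + 1) =>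
            if (j : ℕ) = 0 then iteratedDerivWithin (i : ℕ) u (Ioo a b) t
            else (Nat.choose (i : ℕ) ((j : ℕ) - 1) : ℝ) *
              iteratedDerivWithin ((i : ℕ) + 1 - (j : ℕ)) v (Ioo a b) t)) /
          (v t) ^ (n + 1) := by
  intro t ht
  have hleibniz : ∀ i ≤ n, iteratedDerivWithin i u (Ioo a b) t =
      ∑ m ∈ Finset.range (i + 1), (i.choose m : ℝ) *
        iteratedDerivWithin m (fun x => u x / v x) (Ioo a b) t *
        iteratedDerivWithin (i - m) v (Ioo a b) t := fun i hi =>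
    iteratedDerivWithin_eq_sum_div_mul isOpen_Ioo.uniqueDiffOn ht
      (hu.of_le (by exact_mod_cast hi)) (hv.of_le (by exact_mod_cast hi)) hv0
  change _ = _ * Matrix.det (Matrix.quotientDeriv n (iteratedDerivWithin · u (Ioo a b) t)
    (iteratedDerivWithin · v (Ioo a b) t)) / _
  rw [Matrix.det_quotientDeriv hleibniz, iteratedDerivWithin_zero, ← mul_assoc, ← mul_assoc,
    ← pow_add, Even.neg_one_pow ⟨n, rfl⟩, one_mul,
    mul_div_cancel_right₀ _ (pow_ne_zero _ (hv0 t ht))]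
end

section
/- For all integers p, q ≥ 0, the Delannoy number D(p,q) equals (1/(p!·q!)) times the mixed partial derivative ∂^{p+q}/∂y^q ∂x^p of the function (x,y) ↦ 1/(1 - x - y - xy), evaluated at (x,y) = (0,0). -/
open Finset FormalMultilinearSeries Nat

section

variable {𝕜 : Type*} [RCLike 𝕜]

theorem hasFPowerSeriesOnBall_ofScalars_of_hasSum {f : 𝕜 → 𝕜} {a : ℕ → 𝕜} {r : ℝ} (hr : 0 < r)
    (hf : ∀ y, ‖y‖ < r → HasSum (fun n ↦ a n * y ^ n) (f y)) :
    HasFPowerSeriesOnBall f (ofScalars 𝕜 a) 0 (ENNReal.ofReal r) where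
  r_le := by
    refine ENNReal.le_of_forall_nnreal_lt fun s hs ↦ (ofScalars 𝕜 a).le_radius_of_tendsto (l := 0) ?_
    have hsr : ‖((s : ℝ) : 𝕜)‖ < r := by
      rw [RCLike.norm_ofReal, NNReal.abs_eq]
      exact (ENNReal.ofReal_lt_ofReal_iff hr).1 (by simpa using hs)
    simpa [norm_mul, norm_pow, RCLike.norm_ofReal] using (hf _ hsr).summable.tendsto_atTop_zero.norm
  r_pos := ENNReal.ofReal_pos.2 hr
  hasSum {y} hy := by
    rw [Metric.eball_ofReal, mem_ball_zero_iff] at hy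
    simpa [ofScalars_apply_eq, mul_comm] using hf y hy

theorem iteratedDeriv_eq_factorial_mul_of_hasSum {f : 𝕜 → 𝕜} {a : ℕ → 𝕜} {r : ℝ} (hr : 0 < r)
    (hf : ∀ y, ‖y‖ < r → HasSum (fun n ↦ a n * y ^ n) (f y)) (n : ℕ) :
    iteratedDeriv n f 0 = n ! * a n := by
  have hps := (hasFPowerSeriesOnBall_ofScalars_of_hasSum hr hf).hasFPowerSeriesAt
  have hcoeff := congrFun (ofScalars_series_injective 𝕜 𝕜
    (hps.analyticAt.hasFPowerSeriesAt.eq_formalMultilinearSeries hps)) n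
  rw [← hcoeff, mul_div_cancel₀ _ (Nat.cast_ne_zero.2 n.factorial_ne_zero)]

theorem hasSum_one_div_sub_mul {a b y : 𝕜} (ha : a ≠ 0) (hy : ‖b * y‖ < ‖a‖) :
    HasSum (fun n ↦ b ^ n / a ^ (n + 1) * y ^ n) (1 / (a - b * y)) := by
  have hξ : ‖b * y / a‖ < 1 := by
    rwa [norm_div, div_lt_one (norm_pos_iff.2 ha)]
  have hay : a - b * y ≠ 0 := fun h ↦ hy.ne (by rw [sub_eq_zero.1 h])
  have h := (hasSum_geometric_of_norm_lt_one hξ).mul_left a⁻¹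
  rw [show a⁻¹ * (1 - b * y / a)⁻¹ = 1 / (a - b * y) by field_simp] at h
  refine h.congr_fun fun n ↦ ?_
  rw [div_pow, mul_pow, pow_succ]
  field_simp

theorem iteratedDeriv_one_div_sub_mul {a : 𝕜} (b : 𝕜) (ha : a ≠ 0) (n : ℕ) :
    iteratedDeriv n (fun y ↦ 1 / (a - b * y)) 0 = n ! * (b ^ n / a ^ (n + 1)) := by
  have hr : 0 < ‖a‖ / (‖b‖ + 1) := by positivity
  refine iteratedDeriv_eq_factorial_mul_of_hasSum hr (fun y hy ↦ hasSum_one_div_sub_mul ha ?_) n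
  rw [lt_div_iff₀ (by positivity)] at hy
  rw [norm_mul]
  nlinarith [norm_nonneg b, norm_nonneg y]

theorem hasSum_choose_mul_pow (k : ℕ) {y : 𝕜} (hy : ‖y‖ < 1) :
    HasSum (fun n ↦ (n.choose k : 𝕜) * y ^ n) (y ^ k / (1 - y) ^ (k + 1)) := by
  have h := (hasSum_choose_mul_geometric_of_norm_lt_one k hy).mul_left (y ^ k)
  rw [← hasSum_nat_add_iff' k, sum_eq_zero fun i hi ↦ by
    rw [Nat.choose_eq_zero_of_lt (mem_range.1 hi), Nat.cast_zero, zero_mul], sub_zero]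
  refine (mul_one_div (y ^ k) _ ▸ h).congr_fun fun n ↦ ?_
  ring

theorem one_add_pow_div_one_sub_pow_eq_sum {y : 𝕜} (hy : 1 - y ≠ 0) (p : ℕ) :
    (1 + y) ^ p / (1 - y) ^ (p + 1)
      = ∑ k ∈ range (p + 1), (p.choose k * 2 ^ k : 𝕜) * (y ^ k / (1 - y) ^ (k + 1)) := by
  rw [show 1 + y = 2 * y + (1 - y) by ring, add_pow, sum_div]
  refine sum_congr rfl fun k hk ↦ ?_
  rw [show p + 1 = (p - k) + (k + 1) by have := mem_range.1 hk; omega, pow_add]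
  field_simp
  ring

theorem hasSum_delannoy_mul_pow (p : ℕ) {y : 𝕜} (hy : ‖y‖ < 1) :
    HasSum (fun q ↦ (delannoy p q : 𝕜) * y ^ q) ((1 + y) ^ p / (1 - y) ^ (p + 1)) := by
  have hy1 : 1 - y ≠ 0 := sub_ne_zero.2 fun h ↦ by simp [← h] at hy
  rw [one_add_pow_div_one_sub_pow_eq_sum hy1]
  refine (hasSum_sum fun k _ ↦ (hasSum_choose_mul_pow k hy).mul_left _).congr_fun fun q ↦ ?_
  simp only [delannoy, Nat.cast_sum, Nat.cast_mul, Nat.cast_pow, Nat.cast_ofNat, sum_mul]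
  exact sum_congr rfl fun k _ ↦ by ring

end

/-- `D(p,q)` equals `1/(p! q!)` times the mixed partial derivative
`∂^{p+q}/∂y^q ∂x^p` of `(x,y) ↦ 1/(1 - x - y - xy)` at the origin: first
differentiate `p` times in `x` (with `y` fixed), then `q` times in `y` (with
`x` fixed at `0`), and evaluate at `y = 0`. -/
theorem delannoy_eq_mixed_partial (p q : ℕ) :
    (delannoy p q : ℝ) =
      (1 / ((p.factorial : ℝ) * (q.factorial : ℝ))) *
        iteratedDeriv q
          (fun y : ℝ => iteratedDeriv p (fun x : ℝ => 1 / (1 - x - y - x * y)) 0) 0 := by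
  have inner (y : ℝ) (hy : ‖y‖ < 1) :
      iteratedDeriv p (fun x : ℝ => 1 / (1 - x - y - x * y)) 0
        = p ! * ((1 + y) ^ p / (1 - y) ^ (p + 1)) := by
    have hy1 : 1 - y ≠ 0 := sub_ne_zero.2 fun h ↦ by simp [← h] at hy
    simpa only [show ∀ x, 1 - x - y - x * y = (1 - y) - (1 + y) * x by intro x; ring]
      using iteratedDeriv_one_div_sub_mul (1 + y) hy1 p
  have outer := iteratedDeriv_eq_factorial_mul_of_hasSum one_pos
    (f := fun y : ℝ => iteratedDeriv p (fun x : ℝ => 1 / (1 - x - y - x * y)) 0)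
    (a := fun n ↦ p ! * delannoy p n)
    (fun y hy ↦ by
      simpa only [inner y hy, mul_assoc] using (hasSum_delannoy_mul_pow p hy).mul_left (p ! : ℝ)) q
  rw [outer]
  field_simp
end

section
/- For all integers p, q ≥ 0, the two explicit formulas for the Delannoy numbers agree: ∑_{i=0}^{p} C(p,i)·C(q,i)·2^i = ∑_{i=0}^{q} C(q,i)·C(p+q-i, q). -/
/-!
Expand `2 ^ i = ∑ j, C(i, j)` and exchange the two summations. By trinomial revision
`C(q, i) C(i, j) = C(q, j) C(q - j, i - j)`, the inner sum over `i` becomes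
`C(q, j) ∑ₖ C(q - j, k) C(p, j + k)`, a shifted Vandermonde convolution equal to
`C(q, j) C(p + q - j, q)`.
-/

open Finset

theorem Finset.sum_range_eq_sum_range_of_forall_ge_eq_zero {M : Type*} [AddCommMonoid M]
    {f : ℕ → M} {a b : ℕ} (ha : ∀ k ≥ a, f k = 0) (hb : ∀ k ≥ b, f k = 0) :
    ∑ k ∈ range a, f k = ∑ k ∈ range b, f k := by
  rw [← eventually_constant_sum ha (le_max_left a b), eventually_constant_sum hb (le_max_right a b)]

namespace Nat

theorem choose_add_mul_choose (n j k : ℕ) :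
    n.choose (j + k) * (j + k).choose j = n.choose j * (n - j).choose k := by
  simpa using choose_mul (n := n) (Nat.le_add_right j k)

theorem sum_range_choose_mul_choose_add (m n j : ℕ) :
    ∑ k ∈ range (n + 1), m.choose k * n.choose (j + k) = (m + n).choose (m + j) := by
  have hvanish : ∀ l, ∀ k ≥ m + 1, m.choose k * n.choose l = 0 := fun l k hk ↦ by
    rw [choose_eq_zero_of_lt (by omega : m < k), zero_mul]
  -- Vandermonde on the antidiagonal `m + j`, cut down to `k ≤ m` and reflected by `k ↦ m - k`.
  rw [sum_range_eq_sum_range_of_forall_ge_eq_zero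
      (fun k hk ↦ by rw [choose_eq_zero_of_lt (by omega : n < j + k), mul_zero])
      (fun k ↦ hvanish (j + k) k),
    add_choose_eq, Finset.Nat.sum_antidiagonal_eq_sum_range_succ
      (fun a b ↦ m.choose a * n.choose b), succ_eq_add_one,
    sum_range_eq_sum_range_of_forall_ge_eq_zero (a := m + j + 1) (b := m + 1)
      (fun a ha ↦ hvanish (m + j - a) a (by omega)) (fun a ↦ hvanish (m + j - a) a),
    ← sum_range_reflect]
  refine sum_congr rfl fun k hk ↦ ?_
  have hkm : k ≤ m := mem_range_succ_iff.mp hk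
  rw [add_tsub_cancel_right, choose_symm hkm, show j + (m - k) = m + j - k by omega]

theorem sum_range_choose_mul_choose_mul_choose (p q j : ℕ) :
    ∑ i ∈ range (p + 1), p.choose i * q.choose i * i.choose j
      = q.choose j * (p + q - j).choose q := by
  have hvanish : ∀ i ≥ p + 1, p.choose i * q.choose i * i.choose j = 0 := fun i hi ↦ by
    rw [choose_eq_zero_of_lt (by omega : p < i), zero_mul, zero_mul]
  rw [sum_range_eq_sum_range_of_forall_ge_eq_zero (b := j + (p + 1)) hvanish
      (fun i hi ↦ hvanish i (by omega)),
    sum_range_add, sum_eq_zero fun i hi ↦ by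
      rw [choose_eq_zero_of_lt (mem_range.mp hi), mul_zero], zero_add]
  calc ∑ k ∈ range (p + 1), p.choose (j + k) * q.choose (j + k) * (j + k).choose j
      = q.choose j * ∑ k ∈ range (p + 1), (q - j).choose k * p.choose (j + k) := by
        rw [mul_sum]
        refine sum_congr rfl fun k _ ↦ ?_
        rw [mul_assoc, choose_add_mul_choose]
        ring
    _ = q.choose j * (p + q - j).choose q := by
        rw [sum_range_choose_mul_choose_add]
        rcases le_or_gt j q with hjq | hjq
        · rw [show q - j + p = p + q - j by omega, Nat.sub_add_cancel hjq]
        · rw [choose_eq_zero_of_lt hjq, zero_mul, zero_mul]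

theorem choose_mul_choose_add_sub_eq_zero {p q j : ℕ} (hj : p < j) :
    q.choose j * (p + q - j).choose q = 0 := by
  rcases le_or_gt j q with hjq | hjq
  · rw [choose_eq_zero_of_lt (by omega : p + q - j < q), mul_zero]
  · rw [choose_eq_zero_of_lt hjq, zero_mul]

end Nat

/-- The two explicit formulas for the Delannoy numbers agree:
`∑_{i=0}^{p} C(p,i) C(q,i) 2^i = ∑_{i=0}^{q} C(q,i) C(p+q-i, q)`. -/
theorem delannoy_two_formulas (p q : ℕ) :
    ∑ i ∈ Finset.range (p + 1), p.choose i * q.choose i * 2 ^ i =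
      ∑ i ∈ Finset.range (q + 1), q.choose i * (p + q - i).choose q := by
  calc ∑ i ∈ range (p + 1), p.choose i * q.choose i * 2 ^ i
      = ∑ i ∈ range (p + 1), ∑ j ∈ range (p + 1), p.choose i * q.choose i * i.choose j := by
        refine sum_congr rfl fun i hi ↦ ?_
        have hvanish : ∀ j > i, p.choose i * q.choose i * i.choose j = 0 := fun j hj ↦ by
          rw [Nat.choose_eq_zero_of_lt hj, mul_zero]
        rw [← Nat.sum_range_choose i, mul_sum]
        exact sum_range_eq_sum_range_of_forall_ge_eq_zero (fun j hj ↦ hvanish j hj)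
          (fun j hj ↦ hvanish j ((mem_range.mp hi).trans_le hj))
    _ = ∑ j ∈ range (p + 1), q.choose j * (p + q - j).choose q := by
        rw [sum_comm]
        exact sum_congr rfl fun j _ ↦ Nat.sum_range_choose_mul_choose_mul_choose p q j
    _ = ∑ j ∈ range (q + 1), q.choose j * (p + q - j).choose q :=
        sum_range_eq_sum_range_of_forall_ge_eq_zero
          (fun j hj ↦ Nat.choose_mul_choose_add_sub_eq_zero hj)
          (fun j hj ↦ by rw [Nat.choose_eq_zero_of_lt (by omega : q < j), zero_mul])
end
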